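/- arXiv:2604.13999 — 2 statements merged into one kernel-verified Lean document; each statement's English description precedes it below -/
import Mathlib

section
/- Let η be a Fox pairing on ℤ[π], let f : π → G be a group homomorphism with induced ring homomorphism κ : ℤ[π] → ℤ[G], let S be a subset of ker(f), and let A be the normal closure of S in π. If κ(η(s, t)) = 0 for all s, t ∈ S, then κ(η(a, b)) = 0 for all a, b ∈ A. -/
/-- The augmentation homomorphism of the group ring `ℤ[π]`. -/
noncomputable def aug (π : Type*) [Group π] : MonoidAlgebra ℤ π →ₐ[ℤ] ℤ :=
  MonoidAlgebra.lift ℤ ℤ π 1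

/-- A Fox pairing on the group ring `ℤ[π]`. -/
structure FoxPairing (π : Type*) [Group π] where
  toFun : MonoidAlgebra ℤ π →ₗ[ℤ] MonoidAlgebra ℤ π →ₗ[ℤ] MonoidAlgebra ℤ π
  fox_left : ∀ x x' y : MonoidAlgebra ℤ π,
    toFun (x * x') y = x * toFun x' y + aug π x' • toFun x y
  fox_right : ∀ x y y' : MonoidAlgebra ℤ π,
    toFun x (y * y') = toFun x y * y' + aug π y • toFun x y'

/-!
Fixing one argument of a Fox pairing and composing with `κ` gives a map `φ : π → ℤ[G]` satisfying
`φ (a * b) = σ a * φ b + φ a * τ b` for two homomorphisms `σ τ : π →* ℤ[G]`, one of them `κ ∘ of`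
and the other trivial. For any such twisted derivation, the elements killed by `σ`, `τ` and `φ`
form a normal subgroup: on it `φ` is additive, and `φ (g a g⁻¹) = φ (g g⁻¹) = 0`. Since `S` lies in
it, so does its normal closure; this is applied once in each argument of `η`.
-/

section TwistedDerivation

variable {π R : Type*} [Group π] [Ring R]

def IsTwistedDerivation (σ τ : π →* R) (φ : π → R) : Prop :=
  ∀ a b, φ (a * b) = σ a * φ b + φ a * τ b

namespace IsTwistedDerivation

variable {σ τ : π →* R} {φ : π → R} (hφ : IsTwistedDerivation σ τ φ)
include hφ

lemma map_one : φ 1 = 0 := by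
  simpa only [mul_one, _root_.map_one, one_mul, left_eq_add] using hφ 1 1

def ker : Subgroup π where
  carrier := {a | σ a = 1 ∧ τ a = 1 ∧ φ a = 0}
  one_mem' := ⟨σ.map_one, τ.map_one, hφ.map_one⟩
  mul_mem' := by
    rintro a b ⟨hσa, hτa, hφa⟩ ⟨hσb, hτb, hφb⟩
    refine ⟨by simp [hσa, hσb], by simp [hτa, hτb], ?_⟩
    rw [hφ, hφa, hφb, mul_zero, zero_mul, add_zero]
  inv_mem' := by
    rintro a ⟨hσa, hτa, hφa⟩
    have hσ : σ a⁻¹ = 1 := σ.mem_ker.1 (inv_mem (σ.mem_ker.2 hσa))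
    have hτ : τ a⁻¹ = 1 := τ.mem_ker.1 (inv_mem (τ.mem_ker.2 hτa))
    refine ⟨hσ, hτ, ?_⟩
    have h := hφ a a⁻¹
    rwa [mul_inv_cancel, hφ.map_one, hσa, hφa, one_mul, zero_mul, add_zero, eq_comm] at h

instance ker_normal : hφ.ker.Normal where
  conj_mem := by
    rintro a ⟨hσa, hτa, hφa⟩ g
    have conj_one {ψ : π →* R} (hψ : ψ a = 1) : ψ (g * a * g⁻¹) = 1 := by
      rw [map_mul, map_mul, hψ, mul_one, ← map_mul, mul_inv_cancel, _root_.map_one]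
    refine ⟨conj_one hσa, conj_one hτa, ?_⟩
    calc φ (g * a * g⁻¹)
        = σ g * φ g⁻¹ + φ g * τ g⁻¹ := by
          rw [hφ, hφ, map_mul, hσa, hτa, hφa, mul_one, mul_zero, zero_add, mul_one]
      _ = φ (g * g⁻¹) := (hφ g g⁻¹).symm
      _ = 0 := by rw [mul_inv_cancel, hφ.map_one]

lemma eq_zero_of_mem_normalClosure {S : Set π} (hS : ∀ s ∈ S, σ s = 1 ∧ τ s = 1 ∧ φ s = 0)
    {a : π} (ha : a ∈ Subgroup.normalClosure S) : φ a = 0 :=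
  (Subgroup.normalClosure_le_normal (N := hφ.ker) hS ha).2.2

end IsTwistedDerivation

end TwistedDerivation

lemma aug_of {π : Type*} [Group π] (g : π) : aug π (MonoidAlgebra.of ℤ π g) = 1 := by
  simp [aug]

lemma MonoidAlgebra.mapDomainRingHom_of {π G : Type*} [Group π] [Group G] (f : π →* G) (g : π) :
    MonoidAlgebra.mapDomainRingHom ℤ f (MonoidAlgebra.of ℤ π g) = MonoidAlgebra.of ℤ G (f g) := by
  simp [MonoidAlgebra.of_apply]

namespace FoxPairing

variable {π G : Type*} [Group π] [Group G] (η : FoxPairing π) (f : π →* G)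

lemma isTwistedDerivation_left (y : MonoidAlgebra ℤ π) :
    IsTwistedDerivation ((MonoidAlgebra.of ℤ G).comp f) 1
      fun a => MonoidAlgebra.mapDomainRingHom ℤ f (η.toFun (MonoidAlgebra.of ℤ π a) y) := by
  intro a b
  dsimp only
  rw [map_mul, η.fox_left, aug_of, one_smul, map_add, map_mul, MonoidAlgebra.mapDomainRingHom_of]
  simp

lemma isTwistedDerivation_right (x : MonoidAlgebra ℤ π) :
    IsTwistedDerivation 1 ((MonoidAlgebra.of ℤ G).comp f)
      fun b => MonoidAlgebra.mapDomainRingHom ℤ f (η.toFun x (MonoidAlgebra.of ℤ π b)) := by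
  intro a b
  dsimp only
  rw [map_mul, η.fox_right, aug_of, one_smul, map_add, map_mul, MonoidAlgebra.mapDomainRingHom_of]
  simp [add_comm]

end FoxPairing

/-- Let `S ⊆ ker f` and let `A` be the normal closure of `S` in `π`.
If `κ(η(s, t)) = 0` for all `s, t ∈ S`, then `κ(η(a, b)) = 0` for all `a, b ∈ A`. -/
theorem foxPairing_normalClosure_ker (π : Type*) [Group π] (G : Type*) [Group G]
    (η : FoxPairing π) (f : π →* G) (S : Set π) (hS : S ⊆ (f.ker : Set π))
    (h : ∀ s ∈ S, ∀ t ∈ S,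
      MonoidAlgebra.mapDomainRingHom ℤ f
        (η.toFun (MonoidAlgebra.of ℤ π s) (MonoidAlgebra.of ℤ π t)) = 0) :
    ∀ a ∈ Subgroup.normalClosure S, ∀ b ∈ Subgroup.normalClosure S,
      MonoidAlgebra.mapDomainRingHom ℤ f
        (η.toFun (MonoidAlgebra.of ℤ π a) (MonoidAlgebra.of ℤ π b)) = 0 := by
  have hκS : ∀ s ∈ S, ((MonoidAlgebra.of ℤ G).comp f) s = 1 := fun s hs => by
    rw [MonoidHom.comp_apply, f.mem_ker.1 (hS hs), map_one]
  intro a ha b hb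
  have hSb : ∀ s ∈ S, MonoidAlgebra.mapDomainRingHom ℤ f
      (η.toFun (MonoidAlgebra.of ℤ π s) (MonoidAlgebra.of ℤ π b)) = 0 := fun s hs =>
    (η.isTwistedDerivation_right f _).eq_zero_of_mem_normalClosure
      (fun t ht => ⟨rfl, hκS t ht, h s hs t ht⟩) hb
  exact (η.isTwistedDerivation_left f _).eq_zero_of_mem_normalClosure
    (fun s hs => ⟨hκS s hs, rfl, hSb s hs⟩) ha
end

section
/- Let η be a Fox pairing on ℤ[π] and let I be the augmentation ideal of ℤ[π]. If x, y, x', y' ∈ π satisfy x·y⁻¹ ∈ [π,π] and x'·y'⁻¹ ∈ [π,π], then η(x, x') − η(x, y') − η(y, x') + η(y, y') ∈ I². -/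
/-- The augmentation ideal `I = ker ε`, as a `ℤ`-submodule of `ℤ[π]`. -/
noncomputable def augIdeal (π : Type*) [Group π] : Submodule ℤ (MonoidAlgebra ℤ π) :=
  LinearMap.ker (aug π).toLinearMap

section

variable {π : Type*} [Group π]

lemma mem_augIdeal_iff {a : MonoidAlgebra ℤ π} : a ∈ augIdeal π ↔ aug π a = 0 :=
  Iff.rfl

lemma of_sub_one_mem_augIdeal (g : π) : MonoidAlgebra.of ℤ π g - 1 ∈ augIdeal π := by
  simp [mem_augIdeal_iff, aug, MonoidAlgebra.lift_single]

lemma augIdeal.mul_mem_left (a : MonoidAlgebra ℤ π) {b : MonoidAlgebra ℤ π}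
    (hb : b ∈ augIdeal π) : a * b ∈ augIdeal π := by
  rw [mem_augIdeal_iff] at hb ⊢
  rw [map_mul, hb, mul_zero]

namespace FoxPairing

variable (η : FoxPairing π)

lemma apply_mul_left_of_mem_augIdeal (a : MonoidAlgebra ℤ π) {a' : MonoidAlgebra ℤ π}
    (ha' : a' ∈ augIdeal π) (b : MonoidAlgebra ℤ π) :
    η.toFun (a * a') b = a * η.toFun a' b := by
  rw [η.fox_left, mem_augIdeal_iff.mp ha', zero_smul, add_zero]

lemma apply_mul_right_of_mem_augIdeal (a : MonoidAlgebra ℤ π) {b : MonoidAlgebra ℤ π}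
    (hb : b ∈ augIdeal π) (b' : MonoidAlgebra ℤ π) :
    η.toFun a (b * b') = η.toFun a b * b' := by
  rw [η.fox_right, mem_augIdeal_iff.mp hb, zero_smul, add_zero]

lemma apply_mem_augIdeal_of_right_mem_augIdeal_mul (a : MonoidAlgebra ℤ π)
    {b : MonoidAlgebra ℤ π} (hb : b ∈ augIdeal π * augIdeal π) : η.toFun a b ∈ augIdeal π := by
  refine Submodule.mul_induction_on hb (fun s hs t ht => ?_) (fun u v hu hv => ?_)
  · rw [η.apply_mul_right_of_mem_augIdeal a hs]
    exact augIdeal.mul_mem_left _ ht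
  · rw [map_add]
    exact add_mem hu hv

lemma apply_mem_augIdeal_mul {a b : MonoidAlgebra ℤ π} (ha : a ∈ augIdeal π * augIdeal π)
    (hb : b ∈ augIdeal π * augIdeal π) : η.toFun a b ∈ augIdeal π * augIdeal π := by
  refine Submodule.mul_induction_on ha (fun u hu v hv => ?_) (fun p q hp hq => ?_)
  · rw [η.apply_mul_left_of_mem_augIdeal u hv]
    exact Submodule.mul_mem_mul hu (η.apply_mem_augIdeal_of_right_mem_augIdeal_mul v hb)
  · rw [map_add, LinearMap.add_apply]
    exact add_mem hp hq

end FoxPairing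

lemma of_mul_sub_one_sub_add (g h : π) :
    (MonoidAlgebra.of ℤ π (g * h) - 1) -
        ((MonoidAlgebra.of ℤ π g - 1) + (MonoidAlgebra.of ℤ π h - 1)) =
      (MonoidAlgebra.of ℤ π g - 1) * (MonoidAlgebra.of ℤ π h - 1) := by
  rw [map_mul]
  noncomm_ring

variable (π) in
noncomputable def toQuotAugIdealSq :
    π →* Multiplicative (MonoidAlgebra ℤ π ⧸ augIdeal π * augIdeal π) where
  toFun g := .ofAdd (Submodule.Quotient.mk (MonoidAlgebra.of ℤ π g - 1))
  map_one' := by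
    rw [map_one, sub_self, Submodule.Quotient.mk_zero, ofAdd_zero]
  map_mul' g h := by
    rw [← ofAdd_add, ← Submodule.Quotient.mk_add]
    congr 1
    rw [Submodule.Quotient.eq, of_mul_sub_one_sub_add]
    exact Submodule.mul_mem_mul (of_sub_one_mem_augIdeal g) (of_sub_one_mem_augIdeal h)

lemma of_sub_of_mem_augIdeal_mul_of_mul_inv_mem_commutator {x y : π}
    (h : x * y⁻¹ ∈ commutator π) :
    MonoidAlgebra.of ℤ π x - MonoidAlgebra.of ℤ π y ∈ augIdeal π * augIdeal π := by
  have hxy : toQuotAugIdealSq π x = toQuotAugIdealSq π y := by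
    rw [← mul_inv_eq_one, ← map_inv, ← map_mul]
    exact Abelianization.commutator_subset_ker _ h
  simpa using (Submodule.Quotient.eq _).mp (Multiplicative.ofAdd.injective hxy)

end

/-- If `x·y⁻¹ ∈ [π,π]` and `x'·y'⁻¹ ∈ [π,π]`, then
`η(x, x') - η(x, y') - η(y, x') + η(y, y') ∈ I²`. -/
theorem foxPairing_homologous (π : Type*) [Group π] (η : FoxPairing π)
    (x y x' y' : π) (h : x * y⁻¹ ∈ commutator π) (h' : x' * y'⁻¹ ∈ commutator π) :
    η.toFun (MonoidAlgebra.of ℤ π x) (MonoidAlgebra.of ℤ π x') -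
        η.toFun (MonoidAlgebra.of ℤ π x) (MonoidAlgebra.of ℤ π y') -
        η.toFun (MonoidAlgebra.of ℤ π y) (MonoidAlgebra.of ℤ π x') +
        η.toFun (MonoidAlgebra.of ℤ π y) (MonoidAlgebra.of ℤ π y') ∈
      augIdeal π ^ 2 := by
  have hη := η.apply_mem_augIdeal_mul (of_sub_of_mem_augIdeal_mul_of_mul_inv_mem_commutator h)
    (of_sub_of_mem_augIdeal_mul_of_mul_inv_mem_commutator h')
  simp only [map_sub, LinearMap.sub_apply] at hη
  rw [sq]
  convert hη using 1
  abel
end
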